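/- Let V = (ℤ/2ℤ)^6 with basis c₁,…,c₆ and bilinear form determined by cᵢ·cⱼ = 1 if |i−j| = 1 and 0 otherwise. Let f : V → V be the linear map sending cᵢ to c_{i+1} for i = 1,…,5 and c₆ to c₁ + c₃ + c₅. Then the only quadratic refinements q of the form with q ∘ f = q are the one with q(cᵢ) = 0 for all i and the one with q(cᵢ) = 1 for all i. -/

import Mathlib

/-- A quadratic refinement of a bilinear form `B`. -/
def IsQuadRef {V : Type*} [AddCommGroup V] [Module (ZMod 2) V]
    (B : V → V → ZMod 2) (q : V → ZMod 2) : Prop :=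
  ∀ x y, q (x + y) = q x + q y + B x y

/-- The standard basis vectors `c₁, …, c₆` (indexed `0, …, 5`) of `(ZMod 2)^6`. -/
def cvec (i : Fin 6) : Fin 6 → ZMod 2 := Pi.single i 1

/-- The intersection form with `cᵢ · cⱼ = 1` iff `|i − j| = 1`. -/
def Bchain (x y : Fin 6 → ZMod 2) : ZMod 2 :=
  ∑ i : Fin 5, (x i.castSucc * y i.succ + x i.succ * y i.castSucc)


/-! Since `f` preserves the form, `q ∘ f` is again a quadratic refinement, and two quadratic
refinements agreeing on a basis agree everywhere (the set where they agree is closed under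
addition). Hence `q` is `f`-invariant iff `q (f cᵢ) = q cᵢ` for all `i`. For `i ≤ 4` these
conditions say that `q` is constant on the basis; for `i = 5` the condition then holds
automatically, because `c₁, c₃, c₅` are pairwise orthogonal, so
`q (c₁ + c₃ + c₅) = q c₁ + q c₃ + q c₅ = 3 q c₁ = q c₁`. -/

theorem ZMod.eq_zero_or_eq_one_of_two (c : ZMod 2) : c = 0 ∨ c = 1 := by
  simpa using CharTwo.natCast_cases (R := ZMod 2) c.val

namespace IsQuadRef

variable {V : Type*} [AddCommGroup V] [Module (ZMod 2) V] {B : V → V → ZMod 2}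
  {q q' : V → ZMod 2}

theorem map_zero (hq : IsQuadRef B q) : q 0 = B 0 0 := by
  have h := hq 0 0
  rwa [add_zero, CharTwo.add_self_eq_zero, zero_add] at h

theorem eq_of_basis {ι : Type*} (b : Module.Basis ι (ZMod 2) V) (hq : IsQuadRef B q)
    (hq' : IsQuadRef B q') (h : ∀ i, q (b i) = q' (b i)) : q = q' := by
  funext x
  have hx : x ∈ Submodule.span (ZMod 2) (Set.range b) := b.span_eq ▸ Submodule.mem_top
  induction hx using Submodule.span_induction with
  | mem x hx => obtain ⟨i, rfl⟩ := hx; exact h i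
  | zero => rw [hq.map_zero, hq'.map_zero]
  | add x y _ _ hx hy => rw [hq, hq', hx, hy]
  | smul c x _ hx =>
    obtain rfl | rfl := ZMod.eq_zero_or_eq_one_of_two c
    · rw [zero_smul, hq.map_zero, hq'.map_zero]
    · rwa [one_smul]

variable {F : Type*} [FunLike F V V] [AddHomClass F V V]

theorem comp (hq : IsQuadRef B q) (f : F) (hf : ∀ x y, B (f x) (f y) = B x y) :
    IsQuadRef B (q ∘ f) := by
  intro x y
  simp only [Function.comp_apply, map_add, hq (f x), hf]

theorem forall_map_eq_iff {ι : Type*} (b : Module.Basis ι (ZMod 2) V) (hq : IsQuadRef B q)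
    (f : F) (hf : ∀ x y, B (f x) (f y) = B x y) :
    (∀ x, q (f x) = q x) ↔ ∀ i, q (f (b i)) = q (b i) :=
  ⟨fun h i => h (b i), fun h => congrFun (eq_of_basis b (hq.comp f hf) hq h)⟩

end IsQuadRef

def q0 (x : Fin 6 → ZMod 2) : ZMod 2 := ∑ i : Fin 5, x i.castSucc * x i.succ

def q1 (x : Fin 6 → ZMod 2) : ZMod 2 := q0 x + ∑ i, x i

theorem isQuadRef_q0 : IsQuadRef Bchain q0 := by
  intro x y
  simp only [q0, Bchain, Pi.add_apply, ← Finset.sum_add_distrib]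
  exact Finset.sum_congr rfl fun i _ => by ring

theorem isQuadRef_q1 : IsQuadRef Bchain q1 := by
  intro x y
  simp only [q1, isQuadRef_q0 x y, Pi.add_apply, Finset.sum_add_distrib]
  ring

theorem q0_cvec : ∀ i, q0 (cvec i) = 0 := by decide

theorem q1_cvec : ∀ i, q1 (cvec i) = 1 := by decide

def f33 (x : Fin 6 → ZMod 2) : Fin 6 → ZMod 2 := ![x 5, x 0, x 1 + x 5, x 2, x 3 + x 5, x 4]

theorem Bchain_f33 (x y : Fin 6 → ZMod 2) : Bchain (f33 x) (f33 y) = Bchain x y := by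
  simp only [Bchain, f33, Fin.sum_univ_five, Fin.reduceCastSucc, Fin.reduceSucc, Matrix.cons_val]
  linear_combination (x 5 * y 0 + x 0 * y 5 + x 5 * y 2 + x 2 * y 5) * ZMod.natCast_self 2

theorem apply_eq_f33 {f : (Fin 6 → ZMod 2) →ₗ[ZMod 2] (Fin 6 → ZMod 2)}
    (hf0 : f (cvec 0) = cvec 1) (hf1 : f (cvec 1) = cvec 2)
    (hf2 : f (cvec 2) = cvec 3) (hf3 : f (cvec 3) = cvec 4)
    (hf4 : f (cvec 4) = cvec 5) (hf5 : f (cvec 5) = cvec 0 + cvec 2 + cvec 4)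
    (x : Fin 6 → ZMod 2) : f x = f33 x := by
  conv_lhs => rw [show x = ∑ i, x i • cvec i from pi_eq_sum_univ' x]
  simp only [Fin.sum_univ_six, map_add, map_smul, hf0, hf1, hf2, hf3, hf4, hf5]
  ext j
  fin_cases j <;> simp [cvec, f33]

theorem IsQuadRef.map_cvec_add {q : (Fin 6 → ZMod 2) → ZMod 2} (hq : IsQuadRef Bchain q) :
    q (cvec 0 + cvec 2 + cvec 4) = q (cvec 0) + q (cvec 2) + q (cvec 4) := by
  rw [hq, hq, show Bchain (cvec 0) (cvec 2) = 0 by decide,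
    show Bchain (cvec 0 + cvec 2) (cvec 4) = 0 by decide, add_zero, add_zero]

theorem IsQuadRef.forall_map_cvec_eq_iff {f : (Fin 6 → ZMod 2) →ₗ[ZMod 2] (Fin 6 → ZMod 2)}
    {q : (Fin 6 → ZMod 2) → ZMod 2} (hq : IsQuadRef Bchain q)
    (hf0 : f (cvec 0) = cvec 1) (hf1 : f (cvec 1) = cvec 2)
    (hf2 : f (cvec 2) = cvec 3) (hf3 : f (cvec 3) = cvec 4)
    (hf4 : f (cvec 4) = cvec 5) (hf5 : f (cvec 5) = cvec 0 + cvec 2 + cvec 4) :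
    (∀ i, q (f (cvec i)) = q (cvec i)) ↔ (∀ i, q (cvec i) = 0) ∨ ∀ i, q (cvec i) = 1 := by
  constructor
  · intro h
    have hconst : ∀ i, q (cvec i) = q (cvec 0) := by
      have e1 : q (cvec 1) = q (cvec 0) := by rw [← hf0, h]
      have e2 : q (cvec 2) = q (cvec 1) := by rw [← hf1, h]
      have e3 : q (cvec 3) = q (cvec 2) := by rw [← hf2, h]
      have e4 : q (cvec 4) = q (cvec 3) := by rw [← hf3, h]
      have e5 : q (cvec 5) = q (cvec 4) := by rw [← hf4, h]
      intro i
      fin_cases i <;> simp [e1, e2, e3, e4, e5]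
    obtain h0 | h0 := ZMod.eq_zero_or_eq_one_of_two (q (cvec 0))
    · exact .inl fun i => (hconst i).trans h0
    · exact .inr fun i => (hconst i).trans h0
  · rintro (h | h) i <;> fin_cases i <;>
      simp [hf0, hf1, hf2, hf3, hf4, hf5, hq.map_cvec_add, h, CharTwo.add_self_eq_zero]

/-- For the linear map `f` with `f(cᵢ) = c_{i+1}` (`1 ≤ i ≤ 5`) and
`f(c₆) = c₁ + c₃ + c₅`, the only `f`-invariant quadratic refinements of the chain form are
the one vanishing on all `cᵢ` and the one equal to `1` on all `cᵢ`. -/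
theorem invariant_quadRefs_f33
    (f : (Fin 6 → ZMod 2) →ₗ[ZMod 2] (Fin 6 → ZMod 2))
    (hf0 : f (cvec 0) = cvec 1) (hf1 : f (cvec 1) = cvec 2)
    (hf2 : f (cvec 2) = cvec 3) (hf3 : f (cvec 3) = cvec 4)
    (hf4 : f (cvec 4) = cvec 5) (hf5 : f (cvec 5) = cvec 0 + cvec 2 + cvec 4) :
    (∀ q : (Fin 6 → ZMod 2) → ZMod 2, IsQuadRef Bchain q →
      ((∀ x, q (f x) = q x) ↔ ((∀ i, q (cvec i) = 0) ∨ (∀ i, q (cvec i) = 1)))) ∧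
    (∃ q : (Fin 6 → ZMod 2) → ZMod 2, IsQuadRef Bchain q ∧ (∀ x, q (f x) = q x) ∧
      ∀ i, q (cvec i) = 0) ∧
    (∃ q : (Fin 6 → ZMod 2) → ZMod 2, IsQuadRef Bchain q ∧ (∀ x, q (f x) = q x) ∧
      ∀ i, q (cvec i) = 1) := by
  have hf := apply_eq_f33 hf0 hf1 hf2 hf3 hf4 hf5
  have hf_Bchain : ∀ x y, Bchain (f x) (f y) = Bchain x y := fun x y => by
    rw [hf, hf, Bchain_f33]
  have key : ∀ q, IsQuadRef Bchain q →
      ((∀ x, q (f x) = q x) ↔ ((∀ i, q (cvec i) = 0) ∨ (∀ i, q (cvec i) = 1))) := by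
    intro q hq
    rw [IsQuadRef.forall_map_eq_iff (Pi.basisFun (ZMod 2) (Fin 6)) hq f hf_Bchain]
    simp only [Pi.basisFun_apply]
    exact IsQuadRef.forall_map_cvec_eq_iff hq hf0 hf1 hf2 hf3 hf4 hf5
  exact ⟨key, ⟨q0, isQuadRef_q0, (key q0 isQuadRef_q0).2 (.inl q0_cvec), q0_cvec⟩,
    ⟨q1, isQuadRef_q1, (key q1 isQuadRef_q1).2 (.inr q1_cvec), q1_cvec⟩⟩
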